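/- arXiv:2603.05021 — 4 statements merged into one kernel-verified Lean document; each statement's English description precedes it below -/
import Mathlib

section
/- Let 𝒮 ⊂ ℝⁿ be a compact connected set of positive Lebesgue measure, and let T be a probability density on 𝒮 that is L-Lipschitz with respect to the ℓ¹-norm for some L ≥ 0. Let (𝒮_t)_{t=1}^{m} be a finite partition of 𝒮 into hyperrectangles of positive Lebesgue measure whose pairwise intersections have measure zero, let p be the discretization of T, and let δ̄ be the maximum side length of any cell 𝒮_t over all dimensions. Then KL(T‖U) − KL_D(p‖pᵘ) ≤ Σ_{t=1}^{m} p_t log(1 + (n/(2 p_t)) L δ̄^{n+1}), where a summand is taken to be 0 whenever p_t = 0. -/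
open MeasureTheory Real Finset

noncomputable section

/-! On a cell `𝒮_t` with volume `λ_t` and side-length sum `σ_t`, averaging the ℓ¹-Lipschitz bound
`T s ≤ T y + L ‖s - y‖₁` over `y ∈ 𝒮_t` gives `T ≤ p_t / λ_t + L σ_t / 2` pointwise, because the
mean ℓ¹-distance from a point of a box to the box is at most half the sum of its sides. Hence
`∫_{𝒮_t} T log (T λ(𝒮)) ≤ p_t log ((p_t / λ_t + L σ_t / 2) λ(𝒮))`, and subtracting
`p_t log (p_t λ(𝒮) / λ_t)` leaves `p_t log (1 + λ_t L σ_t / (2 p_t))`, where `λ_t σ_t ≤ n δ̄^{n+1}`: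
the factor `λ(𝒮)` cancels cell by cell. -/

theorem continuous_mul_log_mul_const {c : ℝ} (hc : c ≠ 0) :
    Continuous fun x : ℝ ↦ x * log (x * c) := by
  have h : (fun x : ℝ ↦ x * log (x * c)) = fun x ↦ x * c * log (x * c) * c⁻¹ := by
    funext x
    field_simp
  rw [h]
  exact (continuous_mul_log.comp (continuous_mul_const c)).mul continuous_const

theorem mul_log_mul_le_mul_log_mul {x M c : ℝ} (hx : 0 ≤ x) (hxM : x ≤ M) (hc : 0 < c) :
    x * log (x * c) ≤ x * log (M * c) := by
  rcases hx.eq_or_lt with rfl | hx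
  · simp
  · exact mul_le_mul_of_nonneg_left (log_le_log (by positivity) (by gcongr)) hx.le

theorem setIntegral_mul_log_mul_le {X : Type*} [MeasurableSpace X] {μ : Measure X} {A : Set X}
    {T : X → ℝ} {M c : ℝ} (hA : MeasurableSet A) (hT : IntegrableOn T A μ)
    (hTlog : IntegrableOn (fun s ↦ T s * log (T s * c)) A μ)
    (hT0 : ∀ s ∈ A, 0 ≤ T s) (hTM : ∀ s ∈ A, T s ≤ M) (hc : 0 < c) :
    ∫ s in A, T s * log (T s * c) ∂μ ≤ (∫ s in A, T s ∂μ) * log (M * c) := by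
  rw [← integral_mul_const]
  exact setIntegral_mono_on hTlog (hT.mul_const _) hA fun s hs ↦
    mul_log_mul_le_mul_log_mul (hT0 s hs) (hTM s hs) hc

theorem abs_sub_add_abs_sub_reflect_le {a b u v : ℝ} (hu : u ∈ Set.Icc a b)
    (hv : v ∈ Set.Icc a b) : |u - v| + |u - (a + b - v)| ≤ b - a := by
  obtain ⟨hau, hub⟩ := hu
  obtain ⟨hav, hvb⟩ := hv
  rcases abs_cases (u - v) with ⟨h₁, -⟩ | ⟨h₁, -⟩ <;>
    rcases abs_cases (u - (a + b - v)) with ⟨h₂, -⟩ | ⟨h₂, -⟩ <;> linarith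

section

variable {ι : Type*} [Fintype ι]

theorem continuousOn_of_abs_sub_le_mul_sum_abs_sub {T : (ι → ℝ) → ℝ} {S : Set (ι → ℝ)} {L : ℝ}
    (hT : ∀ x ∈ S, ∀ y ∈ S, |T x - T y| ≤ L * ∑ j, |x j - y j|) : ContinuousOn T S := by
  refine (LipschitzOnWith.of_dist_le_mul (K := nnabs L * Fintype.card ι) fun x hx y hy ↦ ?_)
    |>.continuousOn
  have hsum : ∑ j, |x j - y j| ≤ Fintype.card ι * dist x y := by
    simpa [Real.dist_eq] using Finset.sum_le_card_nsmul univ _ _ fun j _ ↦ dist_le_pi_dist x y j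
  calc dist (T x) (T y) ≤ L * ∑ j, |x j - y j| := hT x hx y hy
    _ ≤ |L| * (Fintype.card ι * dist x y) :=
      mul_le_mul (le_abs_self L) hsum (by positivity) (abs_nonneg L)
    _ = (nnabs L * Fintype.card ι : NNReal) * dist x y := by push_cast [coe_nnabs]; ring

/-- Pairing `y` with its mirror image `a + b - y` in the box, each coordinate contributes at most
`b j - a j` to the sum of the two distances. -/
theorem setIntegral_Icc_sum_abs_sub_le {a b s : ι → ℝ} (hs : s ∈ Set.Icc a b) :
    ∫ y in Set.Icc a b, ∑ j, |s j - y j| ≤ (∑ j, (b j - a j)) / 2 * volume.real (Set.Icc a b) := by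
  set F : (ι → ℝ) → ℝ := fun y ↦ ∑ j, |s j - y j|
  have hF : Continuous F := by fun_prop
  have hFi : IntegrableOn F (Set.Icc a b) := hF.continuousOn.integrableOn_compact isCompact_Icc
  have hFi' : IntegrableOn (fun y ↦ F (a + b - y)) (Set.Icc a b) :=
    (hF.comp (continuous_const.sub continuous_id)).continuousOn.integrableOn_compact isCompact_Icc
  have hreflect : ∫ y in Set.Icc a b, F (a + b - y) = ∫ y in Set.Icc a b, F y := by
    have h := (Measure.measurePreserving_sub_left volume (a + b)).setIntegral_preimage_emb
      (Homeomorph.subLeft (a + b)).measurableEmbedding F (Set.Icc a b)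
    rwa [Set.preimage_const_sub_Icc, add_sub_cancel_right, add_sub_cancel_left] at h
  have hbound : ∀ y ∈ Set.Icc a b, F y + F (a + b - y) ≤ ∑ j, (b j - a j) := fun y hy ↦
    Finset.sum_add_distrib.symm.trans_le <| Finset.sum_le_sum fun j _ ↦
      abs_sub_add_abs_sub_reflect_le ⟨hs.1 j, hs.2 j⟩ ⟨hy.1 j, hy.2 j⟩
  have h : ∫ y in Set.Icc a b, (F y + F (a + b - y)) ≤ ∫ _ in Set.Icc a b, ∑ j, (b j - a j) :=
    setIntegral_mono_on (hFi.add hFi') (integrableOn_const isCompact_Icc.measure_lt_top.ne)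
      measurableSet_Icc hbound
  rw [integral_add hFi hFi', hreflect, setIntegral_const, smul_eq_mul] at h
  linarith

theorem apply_le_setIntegral_Icc_div_add {T : (ι → ℝ) → ℝ} {L : ℝ} {a b s : ι → ℝ} (hL : 0 ≤ L)
    (hLip : ∀ x ∈ Set.Icc a b, ∀ y ∈ Set.Icc a b, |T x - T y| ≤ L * ∑ j, |x j - y j|)
    (hvol : 0 < volume.real (Set.Icc a b)) (hs : s ∈ Set.Icc a b) :
    T s ≤ (∫ y in Set.Icc a b, T y) / volume.real (Set.Icc a b) + L * (∑ j, (b j - a j)) / 2 := by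
  set F : (ι → ℝ) → ℝ := fun y ↦ ∑ j, |s j - y j|
  have hFi : IntegrableOn F (Set.Icc a b) :=
    (by fun_prop : Continuous F).continuousOn.integrableOn_compact isCompact_Icc
  have hTi : IntegrableOn T (Set.Icc a b) :=
    (continuousOn_of_abs_sub_le_mul_sum_abs_sub hLip).integrableOn_compact isCompact_Icc
  have hlower : ∀ y ∈ Set.Icc a b, T s - L * F y ≤ T y := fun y hy ↦ by
    linarith [le_abs_self (T s - T y), hLip s hs y hy]
  have hconst : IntegrableOn (fun _ ↦ T s) (Set.Icc a b) :=
    integrableOn_const isCompact_Icc.measure_lt_top.ne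
  have h : ∫ y in Set.Icc a b, (T s - L * F y) ≤ ∫ y in Set.Icc a b, T y :=
    setIntegral_mono_on (hconst.sub (hFi.const_mul L)) hTi measurableSet_Icc hlower
  rw [integral_sub hconst (hFi.const_mul L),
    setIntegral_const, smul_eq_mul, integral_const_mul] at h
  rw [div_add' _ _ _ hvol.ne', le_div_iff₀ hvol]
  nlinarith [mul_le_mul_of_nonneg_left (setIntegral_Icc_sum_abs_sub_le hs) hL]

theorem setIntegral_Icc_mul_log_sub_le {T : (ι → ℝ) → ℝ} {L c p : ℝ} {a b : ι → ℝ}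
    (hL : 0 ≤ L) (hc : 0 < c) (hT0 : ∀ s ∈ Set.Icc a b, 0 ≤ T s)
    (hLip : ∀ x ∈ Set.Icc a b, ∀ y ∈ Set.Icc a b, |T x - T y| ≤ L * ∑ j, |x j - y j|)
    (hvol : 0 < volume.real (Set.Icc a b)) (hp : ∫ s in Set.Icc a b, T s = p) :
    (∫ s in Set.Icc a b, T s * log (T s * c)) - p * log (p * c / volume.real (Set.Icc a b))
      ≤ p * log (1 + volume.real (Set.Icc a b) * L * (∑ j, (b j - a j)) / (2 * p)) := by
  set l := volume.real (Set.Icc a b)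
  set σ := ∑ j, (b j - a j)
  have hTc := continuousOn_of_abs_sub_le_mul_sum_abs_sub hLip
  have hTM : ∀ s ∈ Set.Icc a b, T s ≤ p / l + L * σ / 2 := fun s hs ↦
    hp ▸ apply_le_setIntegral_Icc_div_add hL hLip hvol hs
  have h := setIntegral_mul_log_mul_le (μ := volume) measurableSet_Icc
    (hTc.integrableOn_compact isCompact_Icc)
    (((continuous_mul_log_mul_const hc.ne').comp_continuousOn hTc).integrableOn_compact
      isCompact_Icc) hT0 hTM hc
  have hp0 : 0 ≤ p := hp ▸ setIntegral_nonneg measurableSet_Icc hT0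
  have hab : a ≤ b := Set.nonempty_Icc.1 (nonempty_of_measureReal_ne_zero hvol.ne')
  have hσ : 0 ≤ σ := Finset.sum_nonneg fun j _ ↦ sub_nonneg.2 (hab j)
  rw [hp] at h
  calc _ ≤ p * log ((p / l + L * σ / 2) * c) - p * log (p * c / l) := sub_le_sub_right h _
    _ = p * log (1 + l * L * σ / (2 * p)) := by
      rcases hp0.eq_or_lt with rfl | hp_pos
      · simp
      rw [← mul_sub, ← log_div (by positivity) (by positivity)]
      congr 2
      field_simp

theorem volume_real_Icc_mul_sum_sub_le {a b : ι → ℝ} {δ : ℝ} (hab : a ≤ b)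
    (hδ : ∀ j, b j - a j ≤ δ) :
    volume.real (Set.Icc a b) * ∑ j, (b j - a j) ≤ Fintype.card ι * δ ^ (Fintype.card ι + 1) := by
  have hprod : ∏ j, (b j - a j) ≤ δ ^ Fintype.card ι :=
    (Finset.prod_le_prod (fun j _ ↦ sub_nonneg.2 (hab j)) fun j _ ↦ hδ j).trans_eq (by simp)
  have hsum : ∑ j, (b j - a j) ≤ Fintype.card ι * δ := by
    simpa using Finset.sum_le_card_nsmul univ _ _ fun j _ ↦ hδ j
  rw [measureReal_def, Real.volume_Icc_pi_toReal hab, pow_succ, mul_left_comm]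
  exact mul_le_mul hprod hsum (Finset.sum_nonneg fun j _ ↦ sub_nonneg.2 (hab j))
    ((Finset.prod_nonneg fun j _ ↦ sub_nonneg.2 (hab j)).trans hprod)

theorem setIntegral_Icc_mul_log_sub_le_of_sub_le {T : (ι → ℝ) → ℝ} {L c p δ : ℝ}
    {a b : ι → ℝ} (hL : 0 ≤ L) (hc : 0 < c) (hT0 : ∀ s ∈ Set.Icc a b, 0 ≤ T s)
    (hLip : ∀ x ∈ Set.Icc a b, ∀ y ∈ Set.Icc a b, |T x - T y| ≤ L * ∑ j, |x j - y j|)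
    (hvol : 0 < volume.real (Set.Icc a b)) (hδ : ∀ j, b j - a j ≤ δ)
    (hp : ∫ s in Set.Icc a b, T s = p) :
    (∫ s in Set.Icc a b, T s * log (T s * c)) - p * log (p * c / volume.real (Set.Icc a b))
      ≤ p * log (1 + Fintype.card ι / (2 * p) * L * δ ^ (Fintype.card ι + 1)) := by
  have hab : a ≤ b := Set.nonempty_Icc.1 (nonempty_of_measureReal_ne_zero hvol.ne')
  have hp0 : 0 ≤ p := hp ▸ setIntegral_nonneg measurableSet_Icc hT0
  refine (setIntegral_Icc_mul_log_sub_le hL hc hT0 hLip hvol hp).trans ?_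
  rcases hp0.eq_or_lt with rfl | hp_pos
  · simp
  have hσ : 0 ≤ ∑ j, (b j - a j) := Finset.sum_nonneg fun j _ ↦ sub_nonneg.2 (hab j)
  gcongr ?_ * log (1 + ?_)
  calc _ = volume.real (Set.Icc a b) * (∑ j, (b j - a j)) * L / (2 * p) := by ring
    _ ≤ Fintype.card ι * δ ^ (Fintype.card ι + 1) * L / (2 * p) := by
      gcongr ?_ * L / _
      exact volume_real_Icc_mul_sum_sub_le hab hδ
    _ = _ := by ring

end

theorem discretization_difference_upper_bound_general
    (n m : ℕ)
    (𝒮 : Set (Fin n → ℝ))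
    (hcomp : IsCompact 𝒮) (hpos : 0 < volume 𝒮)
    (T : (Fin n → ℝ) → ℝ)
    (hTnonneg : ∀ s ∈ 𝒮, 0 ≤ T s)
    -- T is L-Lipschitz w.r.t. the ℓ¹-norm
    (L : ℝ) (hL : 0 ≤ L)
    (hTLip : ∀ x ∈ 𝒮, ∀ y ∈ 𝒮, |T x - T y| ≤ L * ∑ j : Fin n, |x j - y j|)
    -- hyperrectangular partition of 𝒮
    (St : Fin m → Set (Fin n → ℝ))
    (α β : Fin m → Fin n → ℝ)
    (hSt : ∀ t, St t = Set.Icc (α t) (β t))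
    (hStpos : ∀ t, 0 < volume (St t))
    (hcover : (⋃ t, St t) = 𝒮)
    (hdisj : ∀ t t', t ≠ t' → volume (St t ∩ St t') = 0)
    -- maximum side length δ̄ over all cells and dimensions
    (δbar : ℝ)
    (hδbar₁ : ∀ t j, β t j - α t j ≤ δbar)
    -- discretization of T
    (p : Fin m → ℝ) (hp : ∀ t, p t = ∫ s in St t, T s) :
    (∫ s in 𝒮, T s * Real.log (T s * (volume 𝒮).toReal))
        - (∑ t, p t * Real.log (p t * (volume 𝒮).toReal / (volume (St t)).toReal))
      ≤ ∑ t, p t * Real.log (1 + (n : ℝ) / (2 * p t) * L * δbar ^ (n + 1)) := by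
  set c := (volume 𝒮).toReal
  have hc : 0 < c := ENNReal.toReal_pos hpos.ne' hcomp.measure_lt_top.ne
  have hSt𝒮 : ∀ t, St t ⊆ 𝒮 := fun t ↦ hcover ▸ Set.subset_iUnion St t
  have hsplit : ∫ s in 𝒮, T s * log (T s * c) = ∑ t, ∫ s in St t, T s * log (T s * c) := by
    have hint : IntegrableOn (fun s ↦ T s * log (T s * c)) (⋃ t, St t) :=
      hcover ▸ ((continuous_mul_log_mul_const hc.ne').comp_continuousOn
        (continuousOn_of_abs_sub_le_mul_sum_abs_sub hTLip)).integrableOn_compact hcomp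
    rw [← hcover, integral_iUnion_ae (fun t ↦ (hSt t ▸ measurableSet_Icc).nullMeasurableSet)
      hdisj hint, tsum_fintype]
  rw [hsplit, ← Finset.sum_sub_distrib]
  refine Finset.sum_le_sum fun t _ ↦ ?_
  have hcell := setIntegral_Icc_mul_log_sub_le_of_sub_le hL hc
    (fun s hs ↦ hTnonneg s (hSt𝒮 t (hSt t ▸ hs)))
    (fun x hx y hy ↦ hTLip x (hSt𝒮 t (hSt t ▸ hx)) y (hSt𝒮 t (hSt t ▸ hy)))
    (ENNReal.toReal_pos (hSt t ▸ hStpos t).ne' isCompact_Icc.measure_lt_top.ne)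
    (hδbar₁ t) (hSt t ▸ (hp t).symm)
  rw [Fintype.card_fin] at hcell
  rwa [hSt t]

/-- Lemma: Discretization Difference Upper-Bound:
`KL(T‖U) − KL_D(p‖pᵘ) ≤ Σ_t p_t log(1 + (n/(2 p_t)) L δ̄^{n+1})`. -/
theorem discretization_difference_upper_bound
    (n m : ℕ)
    (𝒮 : Set (Fin n → ℝ))
    (hcomp : IsCompact 𝒮) (hconn : IsConnected 𝒮) (hpos : 0 < volume 𝒮)
    (T : (Fin n → ℝ) → ℝ)
    (hTnonneg : ∀ s ∈ 𝒮, 0 ≤ T s)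
    (hTint : (∫ s in 𝒮, T s) = 1)
    -- T is L-Lipschitz w.r.t. the ℓ¹-norm
    (L : ℝ) (hL : 0 ≤ L)
    (hTLip : ∀ x ∈ 𝒮, ∀ y ∈ 𝒮, |T x - T y| ≤ L * ∑ j : Fin n, |x j - y j|)
    -- hyperrectangular partition of 𝒮
    (St : Fin m → Set (Fin n → ℝ))
    (α β : Fin m → Fin n → ℝ)
    (hSt : ∀ t, St t = Set.Icc (α t) (β t))
    (hStpos : ∀ t, 0 < volume (St t))
    (hcover : (⋃ t, St t) = 𝒮)
    (hdisj : ∀ t t', t ≠ t' → volume (St t ∩ St t') = 0)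
    -- maximum side length δ̄ over all cells and dimensions
    (δbar : ℝ)
    (hδbar₁ : ∀ t j, β t j - α t j ≤ δbar)
    (hδbar₂ : ∃ t j, β t j - α t j = δbar)
    -- discretization of T
    (p : Fin m → ℝ) (hp : ∀ t, p t = ∫ s in St t, T s) :
    (∫ s in 𝒮, T s * Real.log (T s * (volume 𝒮).toReal))
        - (∑ t, p t * Real.log (p t * (volume 𝒮).toReal / (volume (St t)).toReal))
      ≤ ∑ t, p t * Real.log (1 + (n : ℝ) / (2 * p t) * L * δbar ^ (n + 1)) :=
  discretization_difference_upper_bound_general n m 𝒮 hcomp hpos T hTnonneg L hL hTLip St α β hSt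
    hStpos hcover hdisj δbar hδbar₁ p hp
end
end

section
/- Let R = ∏_{j=1}^{n} [α_j, β_j] ⊂ ℝⁿ be a hyperrectangle of positive Lebesgue measure with side lengths δ_j = β_j − α_j, let L ≥ 0 and p ∈ ℝ, and let A be the set of functions τ : R → ℝ that are L-Lipschitz with respect to the ℓ¹-norm and satisfy ∫_R τ(s) ds = p. Then sup_{τ∈A} max_{c∈R} τ(c) = p/λ(R) + (L/2) Σ_{j=1}^{n} δ_j, and the supremum is attained by some τ ∈ A. -/
/-!
For `c ∈ R` the Lipschitz bound gives `τ s ≥ τ c - L ∑ⱼ |cⱼ - sⱼ|` on `R`. The integral over `R` of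
a function of the single coordinate `sⱼ` is `λ(R)/δⱼ` times its integral over `[αⱼ, βⱼ]`, and
`∫_{αⱼ}^{βⱼ} |cⱼ - t| dt = ((cⱼ - αⱼ)² + (βⱼ - cⱼ)²)/2 ≤ δⱼ²/2`, so integrating gives
`λ(R) (τ c - (L/2) ∑ⱼ δⱼ) ≤ p`. The affine function `C + L ∑ⱼ (xⱼ - αⱼ)`, with `C` fixed by the
integral constraint, attains this bound at the corner `c = β`.
-/

open MeasureTheory Finset

theorem setIntegral_Icc_sub_left {a b : ℝ} (hab : a ≤ b) :
    ∫ t in Set.Icc a b, (t - a) = (b - a) ^ 2 / 2 := by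
  rw [integral_Icc_eq_integral_Ioc, ← intervalIntegral.integral_of_le hab,
    intervalIntegral.integral_comp_sub_right (fun t => t)]
  simp [integral_id]

theorem setIntegral_Icc_abs_sub {a b c : ℝ} (hac : a ≤ c) (hcb : c ≤ b) :
    ∫ t in Set.Icc a b, |c - t| = ((c - a) ^ 2 + (b - c) ^ 2) / 2 := by
  have hint : ∀ u v : ℝ, IntervalIntegrable (fun t => |c - t|) volume u v :=
    fun u v => (continuous_const.sub continuous_id).abs.intervalIntegrable u v
  rw [integral_Icc_eq_integral_Ioc, ← intervalIntegral.integral_of_le (hac.trans hcb),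
    ← intervalIntegral.integral_add_adjacent_intervals (hint a c) (hint c b)]
  have left : ∫ t in a..c, |c - t| = (c - a) ^ 2 / 2 := by
    rw [intervalIntegral.integral_congr (g := fun t => c - t) fun t ht =>
      abs_of_nonneg (sub_nonneg.2 (Set.uIcc_of_le hac ▸ ht).2)]
    simp [intervalIntegral.integral_comp_sub_left (fun t => t), integral_id]
  have right : ∫ t in c..b, |c - t| = (b - c) ^ 2 / 2 := by
    rw [intervalIntegral.integral_congr (g := fun t => t - c) fun t ht =>
      abs_sub_comm c t ▸ abs_of_nonneg (sub_nonneg.2 (Set.uIcc_of_le hcb ▸ ht).1)]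
    simp [intervalIntegral.integral_comp_sub_right (fun t => t), integral_id]
  rw [left, right, add_div]

section

variable {ι : Type*} [Fintype ι]

def L1LipschitzOn (L : ℝ) (f : (ι → ℝ) → ℝ) (s : Set (ι → ℝ)) : Prop :=
  ∀ x ∈ s, ∀ y ∈ s, |f x - f y| ≤ L * ∑ j, |x j - y j|

theorem L1LipschitzOn.lipschitzOnWith {L : ℝ} {f : (ι → ℝ) → ℝ} {s : Set (ι → ℝ)}
    (hf : L1LipschitzOn L f s) (hL : 0 ≤ L) :
    LipschitzOnWith (L * Fintype.card ι).toNNReal f s := by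
  refine LipschitzOnWith.of_dist_le_mul fun x hx y hy => ?_
  rw [Real.coe_toNNReal _ (by positivity), Real.dist_eq]
  calc |f x - f y| ≤ L * ∑ j, |x j - y j| := hf x hx y hy
    _ ≤ L * ∑ _j : ι, dist x y := by
      gcongr with j
      exact (Real.dist_eq _ _).symm.trans_le (dist_le_pi_dist x y j)
    _ = L * Fintype.card ι * dist x y := by
      rw [sum_const, card_univ, nsmul_eq_mul]; ring

theorem l1LipschitzOn_const_add_mul_sum_sub {L : ℝ} (hL : 0 ≤ L) (C : ℝ) (a : ι → ℝ)
    (s : Set (ι → ℝ)) : L1LipschitzOn L (fun x => C + L * ∑ j, (x j - a j)) s := by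
  intro x _ y _
  rw [add_sub_add_left_eq_sub, ← mul_sub, ← sum_sub_distrib, abs_mul, abs_of_nonneg hL]
  gcongr
  refine (abs_sum_le_sum_abs _ _).trans_eq (sum_congr rfl fun j _ => ?_)
  rw [sub_sub_sub_cancel_right]

variable [DecidableEq ι] {a b : ι → ℝ}

theorem setIntegral_Icc_pi_comp_eval (hab : a ≤ b) (j : ι) {g : ℝ → ℝ}
    (hg : ContinuousOn g (Set.Icc (a j) (b j))) :
    ∫ s in Set.Icc a b, g (s j)
      = (∏ i ∈ univ.erase j, (b i - a i)) * ∫ t in Set.Icc (a j) (b j), g t := by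
  rw [← Set.pi_univ_Icc, volume_pi, Measure.restrict_pi_pi,
    ← integral_map (measurable_pi_apply j).aemeasurable, Measure.pi_map_eval,
    integral_smul_measure]
  · simp [Real.volume_Icc, ENNReal.toReal_prod, hab _, ENNReal.toReal_ofReal, sub_nonneg]
  · rw [Measure.pi_map_eval]
    exact (hg.aestronglyMeasurable measurableSet_Icc).smul_measure _

theorem setIntegral_Icc_pi_sum_sub (hab : a ≤ b) :
    ∫ s in Set.Icc a b, ∑ j, (s j - a j)
      = (∏ i, (b i - a i)) * (∑ j, (b j - a j)) / 2 := by
  rw [integral_finsetSum _ fun j _ =>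
    ((continuous_apply j).sub continuous_const).integrableOn_Icc, mul_sum, sum_div]
  refine sum_congr rfl fun j _ => ?_
  rw [setIntegral_Icc_pi_comp_eval hab j (g := fun t => t - a j) (by fun_prop),
    setIntegral_Icc_sub_left (hab j), ← prod_erase_mul _ _ (mem_univ j)]
  ring

theorem setIntegral_Icc_pi_sum_abs_sub_le {c : ι → ℝ} (hc : c ∈ Set.Icc a b) :
    ∫ s in Set.Icc a b, ∑ j, |c j - s j|
      ≤ (∏ i, (b i - a i)) * (∑ j, (b j - a j)) / 2 := by
  have hab : a ≤ b := hc.1.trans hc.2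
  rw [integral_finsetSum _ fun j _ =>
    (continuous_const.sub (continuous_apply j)).abs.integrableOn_Icc, mul_sum, sum_div]
  refine sum_le_sum fun j _ => ?_
  rw [setIntegral_Icc_pi_comp_eval hab j (g := fun t => |c j - t|) (by fun_prop),
    setIntegral_Icc_abs_sub (hc.1 j) (hc.2 j), ← prod_erase_mul _ _ (mem_univ j)]
  have hcorner : (c j - a j) ^ 2 + (b j - c j) ^ 2 ≤ (b j - a j) ^ 2 := by
    nlinarith [mul_nonneg (sub_nonneg.2 (hc.1 j)) (sub_nonneg.2 (hc.2 j))]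
  have hprod : 0 ≤ ∏ i ∈ univ.erase j, (b i - a i) :=
    prod_nonneg fun i _ => sub_nonneg.2 (hab i)
  calc (∏ i ∈ univ.erase j, (b i - a i)) * (((c j - a j) ^ 2 + (b j - c j) ^ 2) / 2)
      ≤ (∏ i ∈ univ.erase j, (b i - a i)) * ((b j - a j) ^ 2 / 2) := by gcongr
    _ = _ := by ring

theorem setIntegral_Icc_pi_const_add_mul_sum_sub (hab : a ≤ b) (C L : ℝ) :
    ∫ s in Set.Icc a b, (C + L * ∑ j, (s j - a j))
      = (∏ i, (b i - a i)) * (C + L * (∑ j, (b j - a j)) / 2) := by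
  rw [integral_add continuous_const.integrableOn_Icc
      (by fun_prop : Continuous fun s : ι → ℝ => L * ∑ j, (s j - a j)).integrableOn_Icc,
    setIntegral_const, integral_const_mul, setIntegral_Icc_pi_sum_sub hab, measureReal_def,
    Real.volume_Icc_pi_toReal hab, smul_eq_mul]
  ring

theorem L1LipschitzOn.prod_mul_sub_le_setIntegral {L : ℝ} {τ : (ι → ℝ) → ℝ}
    (hτ : L1LipschitzOn L τ (Set.Icc a b)) (hL : 0 ≤ L) {c : ι → ℝ} (hc : c ∈ Set.Icc a b) :
    (∏ i, (b i - a i)) * (τ c - L / 2 * ∑ j, (b j - a j)) ≤ ∫ s in Set.Icc a b, τ s := by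
  have hab : a ≤ b := hc.1.trans hc.2
  have hdist : IntegrableOn (fun s => L * ∑ j, |c j - s j|) (Set.Icc a b) :=
    (by fun_prop : Continuous fun s : ι → ℝ => L * ∑ j, |c j - s j|).integrableOn_Icc
  have hbelow : ∀ s ∈ Set.Icc a b, τ c - L * ∑ j, |c j - s j| ≤ τ s := fun s hs => by
    linarith [(le_abs_self _).trans (hτ c hc s hs)]
  calc (∏ i, (b i - a i)) * (τ c - L / 2 * ∑ j, (b j - a j))
      = (∏ i, (b i - a i)) * τ c - L * ((∏ i, (b i - a i)) * (∑ j, (b j - a j)) / 2) := by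
        ring
    _ ≤ (∏ i, (b i - a i)) * τ c - L * ∫ s in Set.Icc a b, ∑ j, |c j - s j| := by
        gcongr; exact setIntegral_Icc_pi_sum_abs_sub_le hc
    _ = ∫ s in Set.Icc a b, (τ c - L * ∑ j, |c j - s j|) := by
        rw [integral_sub continuous_const.integrableOn_Icc hdist, setIntegral_const,
          integral_const_mul, measureReal_def, Real.volume_Icc_pi_toReal hab, smul_eq_mul]
    _ ≤ ∫ s in Set.Icc a b, τ s :=
        setIntegral_mono_on (continuous_const.integrableOn_Icc.sub hdist)
          ((hτ.lipschitzOnWith hL).continuousOn.integrableOn_compact isCompact_Icc)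
          measurableSet_Icc hbelow

end

/-- Theorem: solution of the relaxed maximization problem:
over all `L`-Lipschitz (ℓ¹) functions `τ` on the hyperrectangle `R` with
`∫_R τ = p`, the largest attainable value `max_{c∈R} τ(c)` equals
`p/λ(R) + (L/2) Σ_j δ_j`, and it is attained. -/
theorem relaxed_max_over_rectangle
    (n : ℕ)
    (α β : Fin n → ℝ)
    (R : Set (Fin n → ℝ)) (hR : R = Set.Icc α β)
    (hRpos : 0 < volume R)
    (L p : ℝ) (hL : 0 ≤ L) :
    IsGreatest
      {y : ℝ | ∃ τ : (Fin n → ℝ) → ℝ,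
        (∀ x ∈ R, ∀ x' ∈ R, |τ x - τ x'| ≤ L * ∑ j : Fin n, |x j - x' j|) ∧
        (∫ s in R, τ s) = p ∧
        ∃ c ∈ R, y = τ c}
      (p / (volume R).toReal + L / 2 * ∑ j : Fin n, (β j - α j)) := by
  subst hR
  have hab : α ≤ β := Set.nonempty_Icc.1 (nonempty_of_measure_ne_zero hRpos.ne')
  have hV : (volume (Set.Icc α β)).toReal = ∏ i, (β i - α i) := Real.volume_Icc_pi_toReal hab
  have hVpos : 0 < ∏ i, (β i - α i) :=
    hV ▸ ENNReal.toReal_pos hRpos.ne' measure_Icc_lt_top.ne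
  rw [hV]
  constructor
  · refine ⟨fun x => (p / ∏ i, (β i - α i) - L / 2 * ∑ j, (β j - α j)) + L * ∑ j, (x j - α j),
      l1LipschitzOn_const_add_mul_sum_sub hL _ α _, ?_, β, Set.right_mem_Icc.2 hab, by ring⟩
    rw [setIntegral_Icc_pi_const_add_mul_sum_sub hab]
    field_simp
    ring
  · rintro _ ⟨τ, hτ, rfl, c, hc, rfl⟩
    have hmean := L1LipschitzOn.prod_mul_sub_le_setIntegral hτ hL hc
    rw [mul_comm, ← le_div_iff₀ hVpos] at hmean
    linarith
end

section
/- Let m ≥ 1, let p ∈ ℝ^m be a probability vector (p_t ≥ 0 for all t, Σ_{t=1}^{m} p_t = 1), and let C ≥ 0. Then Σ_{t=1}^{m} p_t log(1 + C/p_t) ≤ log(1 + m C), where a summand is taken to be 0 whenever p_t = 0. -/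
open Real Finset

noncomputable section

/-- Jensen step: for a probability vector `p` on `m ≥ 1` elements and
`C ≥ 0`, `Σ_t p_t log(1 + C/p_t) ≤ log(1 + m C)` (terms with `p_t = 0` vanish,
which is the value the formula yields in Lean since `C/0 = 0`). -/
theorem sum_p_log_one_add_div_le
    (m : ℕ) (hm : 1 ≤ m)
    (p : Fin m → ℝ)
    (hp : ∀ t, 0 ≤ p t)
    (hpsum : (∑ t, p t) = 1)
    (C : ℝ) (hC : 0 ≤ C) :
    (∑ t, p t * Real.log (1 + C / p t)) ≤ Real.log (1 + (m : ℝ) * C) := by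
  set x : Fin m → ℝ := fun t => 1 + C / p t with hx
  have hxpos : ∀ t, 0 < x t := by
    intro t
    have : 0 ≤ C / p t := div_nonneg hC (hp t)
    simp only [hx]; linarith
  have hsum_le : (∑ t, p t * x t) ≤ 1 + (m : ℝ) * C := by
    have h1 : ∀ t, p t * x t ≤ p t + C := by
      intro t
      have : p t * (C / p t) ≤ C := by
        rcases eq_or_lt_of_le (hp t) with h | h
        · simp [← h, hC]
        · rw [mul_div_cancel₀ _ (ne_of_gt h)]
      simp only [hx]; nlinarith [hp t]
    calc (∑ t, p t * x t) ≤ ∑ t, (p t + C) := Finset.sum_le_sum (fun t _ => h1 t)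
      _ = 1 + (m : ℝ) * C := by
          rw [Finset.sum_add_distrib, hpsum, Finset.sum_const]
          simp [mul_comm]
  have hsum_pos : 0 < (∑ t, p t * x t) := by
    have h1 : ∀ t, p t ≤ p t * x t := by
      intro t
      have : 0 ≤ C / p t := div_nonneg hC (hp t)
      simp only [hx]
      nlinarith [hp t, this]
    have := Finset.sum_le_sum (fun t (_ : t ∈ Finset.univ) => h1 t)
    rw [hpsum] at this
    linarith
  have hjensen : (∑ t, p t * Real.log (x t)) ≤ Real.log (∑ t, p t * x t) := by
    have hcc : ConcaveOn ℝ (Set.Ioi 0) Real.log := strictConcaveOn_log_Ioi.concaveOn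
    have := hcc.le_map_sum (t := Finset.univ) (w := p) (p := x)
      (fun i _ => hp i) hpsum (fun i _ => hxpos i)
    simpa using this
  calc (∑ t, p t * Real.log (1 + C / p t)) = ∑ t, p t * Real.log (x t) := rfl
    _ ≤ Real.log (∑ t, p t * x t) := hjensen
    _ ≤ Real.log (1 + (m : ℝ) * C) := Real.log_le_log hsum_pos hsum_le
end
end

section
/- Let 𝒳 ⊂ ℝ^{n_x} be a hyperrectangle of positive Lebesgue measure, q a continuous Markov kernel density on 𝒳 × 𝒳, and (𝒳_i)_{i∈X} a finite hyperrectangular partition of 𝒳 (|X| = N) with polytopes ℙ_i and per-step functional Φ as defined; let δ̄ be the maximum side length over all cells, let L ≥ 0, and define ε(p′) = Σ_{j∈X} p′_j log(1 + (n_x/(2 p′_j)) L δ̄^{n_x+1}) (terms with p′_j = 0 taken to be 0) and Φ^ε(p′, V) = Φ(p′, V) + ε(p′). For x ∈ 𝒳 let P_x ∈ ℝ^N be the vector P_x(j) = ∫_{𝒳_j} q(x, x′) dx′. Suppose (a) for every x ∈ 𝒳, Φ^ε(P_x, 0) ≥ ∫_𝒳 q(x, x′) log(q(x, x′) λ(𝒳))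 dx′; and (b) 𝒱 : 𝒳 → ℝ is bounded and measurable and V ∈ ℝ^N satisfies V_j ≥ sup_{x′∈𝒳_j} 𝒱(x′) for every j ∈ X. Then for every i ∈ X, sup_{p′∈ℙ_i} Φ^ε(p′, V) ≥ sup_{x∈𝒳_i} [ ∫_𝒳 q(x, x′) log(q(x, x′) λ(𝒳)) dx′ + ∫_𝒳 q(x, x′) 𝒱(x′) dx′ ]. -/
/-!
Fix `x ∈ 𝒳ᵢ`. Splitting `∫ q(x, ·) 𝒱` over the cells and using `𝒱 ≤ V_j` on `𝒳_j` gives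
`∫ q(x, ·) 𝒱 ≤ ∑ⱼ Pₓ(j) V_j`; with (a) and the linearity of `Φ^ε` in `V`, the continuous value
at `x` is at most `Φ^ε(Pₓ, V)`, and `Pₓ ∈ ℙᵢ`. It remains that the `sSup` over `ℙᵢ` is a true
supremum (in `ℝ` an unbounded set has `sSup = 0`): on the probability simplex every term of
`Φ^ε(·, V)` is bounded, as `p log (p c) ≤ |log c|` and `p log (1 + K / p) ≤ |K|` for `0 ≤ p ≤ 1`.
-/

open MeasureTheory Real Finset Function

lemma mul_le_abs_of_mem_Icc {p : ℝ} (v : ℝ) (hp₀ : 0 ≤ p) (hp₁ : p ≤ 1) : p * v ≤ |v| :=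
  (le_abs_self _).trans <| by
    rw [abs_mul, abs_of_nonneg hp₀]; exact mul_le_of_le_one_left (abs_nonneg _) hp₁

lemma mul_log_mul_le_abs_log {p : ℝ} (c : ℝ) (hp₀ : 0 ≤ p) (hp₁ : p ≤ 1) :
    p * log (p * c) ≤ |log c| := by
  rcases hp₀.eq_or_lt with rfl | hp
  · simp
  rcases eq_or_ne c 0 with rfl | hc
  · simp
  rw [log_mul hp.ne' hc, mul_add]
  linarith [mul_log_nonpos hp₀ hp₁, mul_le_abs_of_mem_Icc (log c) hp₀ hp₁]

lemma mul_log_one_add_div_le_abs {p : ℝ} (c : ℝ) (hp₀ : 0 ≤ p) :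
    p * log (1 + c / p) ≤ |c| := by
  rcases hp₀.eq_or_lt with rfl | hp
  · simp
  have hlog : log (1 + c / p) ≤ |c| / p := by
    rcases eq_or_ne (1 + c / p) 0 with h | h
    · rw [h, log_zero]; positivity
    calc log (1 + c / p) = log |1 + c / p| := (log_abs _).symm
      _ ≤ |1 + c / p| - 1 := log_le_sub_one_of_pos (abs_pos.2 h)
      _ ≤ |c| / p := by
          have := abs_add_le 1 (c / p)
          rw [abs_one, abs_div, abs_of_pos hp] at this
          linarith
  calc p * log (1 + c / p) ≤ p * (|c| / p) := by gcongr
    _ = |c| := by field_simp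

lemma bddAbove_image_stdSimplex_sum_mul_log {ι : Type*} [Fintype ι] (c : ι → ℝ) (K : ℝ)
    (V : ι → ℝ) :
    BddAbove ((fun p : ι → ℝ => ∑ j, p j * log (p j * c j) + ∑ j, p j * V j
      + ∑ j, p j * log (1 + K / p j)) '' stdSimplex ℝ ι) := by
  refine ⟨∑ j, (|log (c j)| + |V j| + |K|), ?_⟩
  rintro _ ⟨p, hp, rfl⟩
  simp only [← sum_add_distrib]
  refine sum_le_sum fun j _ => ?_
  obtain ⟨hp₀, hp₁⟩ := mem_Icc_of_mem_stdSimplex hp j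
  linarith [mul_log_mul_le_abs_log (c j) hp₀ hp₁, mul_le_abs_of_mem_Icc (V j) hp₀ hp₁,
    mul_log_one_add_div_le_abs K hp₀]

section Partition

variable {α ι : Type*} [MeasurableSpace α] [Fintype ι] {μ : Measure α} {s : ι → Set α}
  {f g : α → ℝ}

lemma integral_iUnion_ae_fintype (hs : ∀ j, MeasurableSet (s j))
    (hd : Pairwise (AEDisjoint μ on s)) (hf : IntegrableOn f (⋃ j, s j) μ) :
    ∫ x in ⋃ j, s j, f x ∂μ = ∑ j, ∫ x in s j, f x ∂μ := by
  rw [integral_iUnion_ae (fun j => (hs j).nullMeasurableSet) hd hf, tsum_fintype]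

lemma setIntegral_mem_stdSimplex (hs : ∀ j, MeasurableSet (s j))
    (hd : Pairwise (AEDisjoint μ on s)) (hf₀ : ∀ x ∈ ⋃ j, s j, 0 ≤ f x)
    (hf : IntegrableOn f (⋃ j, s j) μ) (hf₁ : ∫ x in ⋃ j, s j, f x ∂μ = 1) :
    (fun j => ∫ x in s j, f x ∂μ) ∈ stdSimplex ℝ ι :=
  ⟨fun j => setIntegral_nonneg (hs j) fun x hx => hf₀ x (Set.mem_iUnion_of_mem j hx),
    by rw [← integral_iUnion_ae_fintype hs hd hf, hf₁]⟩

lemma setIntegral_mul_le_sum_mul (hs : ∀ j, MeasurableSet (s j))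
    (hd : Pairwise (AEDisjoint μ on s)) (hf₀ : ∀ x ∈ ⋃ j, s j, 0 ≤ f x)
    (hf : IntegrableOn f (⋃ j, s j) μ) (hfg : IntegrableOn (fun x => f x * g x) (⋃ j, s j) μ)
    {V : ι → ℝ} (hg : ∀ j, ∀ x ∈ s j, g x ≤ V j) :
    ∫ x in ⋃ j, s j, f x * g x ∂μ ≤ ∑ j, (∫ x in s j, f x ∂μ) * V j := by
  rw [integral_iUnion_ae_fintype hs hd hfg]
  refine sum_le_sum fun j _ => ?_
  rw [← integral_mul_const]
  exact setIntegral_mono_on (hfg.mono_set (Set.subset_iUnion s j))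
    ((hf.mono_set (Set.subset_iUnion s j)).mul_const _) (hs j) fun x hx =>
      mul_le_mul_of_nonneg_left (hg j x hx) (hf₀ x (Set.mem_iUnion_of_mem j hx))

end Partition

theorem local_correction_induction_step_general
    (nx N : ℕ)
    (a b : Fin nx → ℝ)
    (𝒳 : Set (Fin nx → ℝ)) (h𝒳 : 𝒳 = Set.Icc a b)
    (q : (Fin nx → ℝ) → (Fin nx → ℝ) → ℝ)
    (hqcont : ContinuousOn (fun z : (Fin nx → ℝ) × (Fin nx → ℝ) => q z.1 z.2) (𝒳 ×ˢ 𝒳))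
    (hqnonneg : ∀ x ∈ 𝒳, ∀ x' ∈ 𝒳, 0 ≤ q x x')
    (hqint : ∀ x ∈ 𝒳, (∫ x' in 𝒳, q x x') = 1)
    -- hyperrectangular partition of 𝒳
    (Xp : Fin N → Set (Fin nx → ℝ))
    (α β : Fin N → Fin nx → ℝ)
    (hXrect : ∀ i, Xp i = Set.Icc (α i) (β i))
    (hXcover : (⋃ i, Xp i) = 𝒳)
    (hXdisj : ∀ i j, i ≠ j → volume (Xp i ∩ Xp j) = 0)
    -- maximum side length δ̄ over all cells and dimensions
    (δbar : ℝ)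
    (L : ℝ)
    -- abstraction data
    (Pup Plow : Fin N → Fin N → ℝ)
    (hPup : ∀ i j, IsGreatest ((fun x => ∫ x' in Xp j, q x x') '' Xp i) (Pup i j))
    (hPlow : ∀ i j, IsLeast ((fun x => ∫ x' in Xp j, q x x') '' Xp i) (Plow i j))
    (ℙ : Fin N → Set (Fin N → ℝ))
    (hℙ : ∀ i, ℙ i = {p' : Fin N → ℝ |
        (∀ j, 0 ≤ p' j) ∧ (∑ j, p' j) = 1 ∧ ∀ j, Plow i j ≤ p' j ∧ p' j ≤ Pup i j})
    (Φ : (Fin N → ℝ) → (Fin N → ℝ) → ℝ)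
    (hΦ : ∀ p' V, Φ p' V =
        (∑ j, p' j * Real.log (p' j * (volume 𝒳).toReal / (volume (Xp j)).toReal))
        + ∑ j, p' j * V j)
    -- ε correction and corrected functional
    (ε : (Fin N → ℝ) → ℝ)
    (hε : ∀ p', ε p' =
        ∑ j, p' j * Real.log (1 + (nx : ℝ) / (2 * p' j) * L * δbar ^ (nx + 1)))
    (Φε : (Fin N → ℝ) → (Fin N → ℝ) → ℝ)
    (hΦε : ∀ p' V, Φε p' V = Φ p' V + ε p')
    -- induced discrete transition probabilities P_x
    (Px : (Fin nx → ℝ) → Fin N → ℝ)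
    (hPx : ∀ x j, Px x j = ∫ x' in Xp j, q x x')
    -- hypothesis (a): pointwise domination of the one-step continuous KL term
    (ha : ∀ x ∈ 𝒳,
        Φε (Px x) 0 ≥ ∫ x' in 𝒳, q x x' * Real.log (q x x' * (volume 𝒳).toReal))
    -- hypothesis (b): 𝒱 bounded measurable, dominated cell-wise by V
    (𝒱 : (Fin nx → ℝ) → ℝ)
    (h𝒱meas : Measurable 𝒱)
    (h𝒱bdd : ∃ M : ℝ, ∀ x ∈ 𝒳, |𝒱 x| ≤ M)
    (V : Fin N → ℝ)
    (hV : ∀ j, ∀ x' ∈ Xp j, 𝒱 x' ≤ V j) :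
    ∀ i : Fin N,
      sSup ((fun p' => Φε p' V) '' ℙ i)
        ≥ sSup ((fun x =>
            (∫ x' in 𝒳, q x x' * Real.log (q x x' * (volume 𝒳).toReal))
            + ∫ x' in 𝒳, q x x' * 𝒱 x') '' Xp i) := by
  intro i
  obtain ⟨M, hM⟩ := h𝒱bdd
  subst hXcover
  have hXm : ∀ j, MeasurableSet (Xp j) := fun j => hXrect j ▸ measurableSet_Icc
  have hd : Pairwise (AEDisjoint volume on Xp) := fun j k hjk => hXdisj j k hjk
  have hq : ∀ x ∈ ⋃ i, Xp i, IntegrableOn (q x) (⋃ i, Xp i) := fun x hx =>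
    (hqcont.uncurry_left (f := q) x hx).integrableOn_compact (h𝒳 ▸ isCompact_Icc)
  have hq𝒱 : ∀ x ∈ ⋃ i, Xp i, IntegrableOn (fun x' => q x x' * 𝒱 x') (⋃ i, Xp i) :=
    fun x hx => (hq x hx).mul_bdd h𝒱meas.aestronglyMeasurable
      ((ae_restrict_iff' (h𝒳 ▸ measurableSet_Icc)).2 (ae_of_all _ hM))
  have hPx_mem : ∀ x ∈ Xp i, Px x ∈ ℙ i := fun x hx => by
    have hx' := Set.mem_iUnion_of_mem i hx
    obtain ⟨hnonneg, hsum⟩ :=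
      setIntegral_mem_stdSimplex hXm hd (hqnonneg x hx') (hq x hx') (hqint x hx')
    rw [hℙ, funext (hPx x)]
    exact ⟨hnonneg, hsum, fun j => ⟨(hPlow i j).2 ⟨x, hx, rfl⟩, (hPup i j).2 ⟨x, hx, rfl⟩⟩⟩
  have hval : ∀ x ∈ ⋃ i, Xp i,
      (∫ x' in ⋃ i, Xp i, q x x' * log (q x x' * (volume (⋃ i, Xp i)).toReal))
        + ∫ x' in ⋃ i, Xp i, q x x' * 𝒱 x' ≤ Φε (Px x) V := fun x hx => by
    have hsplit : Φε (Px x) V = Φε (Px x) 0 + ∑ j, Px x j * V j := by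
      simp only [hΦε, hΦ, Pi.zero_apply, mul_zero, sum_const_zero]; ring
    rw [hsplit]
    refine add_le_add (ha x hx) ?_
    simpa only [hPx] using
      setIntegral_mul_le_sum_mul hXm hd (hqnonneg x hx) (hq x hx) (hq𝒱 x hx) hV
  have hbdd : BddAbove ((fun p => Φε p V) '' ℙ i) := by
    refine (bddAbove_image_stdSimplex_sum_mul_log
      (fun j => (volume (⋃ i, Xp i)).toReal / (volume (Xp j)).toReal)
      ((nx : ℝ) / 2 * L * δbar ^ (nx + 1)) V).mono ?_
    rintro _ ⟨p, hp, rfl⟩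
    rw [hℙ] at hp
    refine ⟨p, ⟨hp.1, hp.2.1⟩, ?_⟩
    simp only [hΦε, hΦ, hε]
    congr 2
    · simp only [mul_div_assoc]
    · ext j; ring_nf
  obtain ⟨x₀, hx₀, -⟩ := (hPup i i).1
  exact csSup_le ⟨_, x₀, hx₀, rfl⟩ fun _ ⟨x, hx, hxy⟩ =>
    hxy ▸ (hval x (Set.mem_iUnion_of_mem i hx)).trans (le_csSup hbdd ⟨Px x, hPx_mem x hx, rfl⟩)

/-- induction step for the locally-corrected DP upper bound: if the
ε-corrected one-step functional dominates the continuous one-step KL term pointwise,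
and `V` dominates `𝒱` cell-wise, then for every cell `i` the robust ε-corrected
one-step value dominates the continuous one-step value over the cell. -/
theorem local_correction_induction_step
    (nx N : ℕ)
    (a b : Fin nx → ℝ)
    (𝒳 : Set (Fin nx → ℝ)) (h𝒳 : 𝒳 = Set.Icc a b)
    (h𝒳vol : 0 < volume 𝒳)
    (q : (Fin nx → ℝ) → (Fin nx → ℝ) → ℝ)
    (hqcont : ContinuousOn (fun z : (Fin nx → ℝ) × (Fin nx → ℝ) => q z.1 z.2) (𝒳 ×ˢ 𝒳))
    (hqnonneg : ∀ x ∈ 𝒳, ∀ x' ∈ 𝒳, 0 ≤ q x x')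
    (hqint : ∀ x ∈ 𝒳, (∫ x' in 𝒳, q x x') = 1)
    -- hyperrectangular partition of 𝒳
    (Xp : Fin N → Set (Fin nx → ℝ))
    (α β : Fin N → Fin nx → ℝ)
    (hXrect : ∀ i, Xp i = Set.Icc (α i) (β i))
    (hXpos : ∀ i, 0 < volume (Xp i))
    (hXcover : (⋃ i, Xp i) = 𝒳)
    (hXdisj : ∀ i j, i ≠ j → volume (Xp i ∩ Xp j) = 0)
    -- maximum side length δ̄ over all cells and dimensions
    (δbar : ℝ)
    (hδbar₁ : ∀ i j, β i j - α i j ≤ δbar)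
    (hδbar₂ : ∃ i j, β i j - α i j = δbar)
    (L : ℝ) (hL : 0 ≤ L)
    -- abstraction data
    (Pup Plow : Fin N → Fin N → ℝ)
    (hPup : ∀ i j, IsGreatest ((fun x => ∫ x' in Xp j, q x x') '' Xp i) (Pup i j))
    (hPlow : ∀ i j, IsLeast ((fun x => ∫ x' in Xp j, q x x') '' Xp i) (Plow i j))
    (ℙ : Fin N → Set (Fin N → ℝ))
    (hℙ : ∀ i, ℙ i = {p' : Fin N → ℝ |
        (∀ j, 0 ≤ p' j) ∧ (∑ j, p' j) = 1 ∧ ∀ j, Plow i j ≤ p' j ∧ p' j ≤ Pup i j})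
    (Φ : (Fin N → ℝ) → (Fin N → ℝ) → ℝ)
    (hΦ : ∀ p' V, Φ p' V =
        (∑ j, p' j * Real.log (p' j * (volume 𝒳).toReal / (volume (Xp j)).toReal))
        + ∑ j, p' j * V j)
    -- ε correction and corrected functional
    (ε : (Fin N → ℝ) → ℝ)
    (hε : ∀ p', ε p' =
        ∑ j, p' j * Real.log (1 + (nx : ℝ) / (2 * p' j) * L * δbar ^ (nx + 1)))
    (Φε : (Fin N → ℝ) → (Fin N → ℝ) → ℝ)
    (hΦε : ∀ p' V, Φε p' V = Φ p' V + ε p')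
    -- induced discrete transition probabilities P_x
    (Px : (Fin nx → ℝ) → Fin N → ℝ)
    (hPx : ∀ x j, Px x j = ∫ x' in Xp j, q x x')
    -- hypothesis (a): pointwise domination of the one-step continuous KL term
    (ha : ∀ x ∈ 𝒳,
        Φε (Px x) 0 ≥ ∫ x' in 𝒳, q x x' * Real.log (q x x' * (volume 𝒳).toReal))
    -- hypothesis (b): 𝒱 bounded measurable, dominated cell-wise by V
    (𝒱 : (Fin nx → ℝ) → ℝ)
    (h𝒱meas : Measurable 𝒱)
    (h𝒱bdd : ∃ M : ℝ, ∀ x ∈ 𝒳, |𝒱 x| ≤ M)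
    (V : Fin N → ℝ)
    (hV : ∀ j, ∀ x' ∈ Xp j, 𝒱 x' ≤ V j) :
    ∀ i : Fin N,
      sSup ((fun p' => Φε p' V) '' ℙ i)
        ≥ sSup ((fun x =>
            (∫ x' in 𝒳, q x x' * Real.log (q x x' * (volume 𝒳).toReal))
            + ∫ x' in 𝒳, q x x' * 𝒱 x') '' Xp i) :=
  local_correction_induction_step_general nx N a b 𝒳 h𝒳 q hqcont hqnonneg hqint Xp α β hXrect
    hXcover hXdisj δbar L Pup Plow hPup hPlow ℙ hℙ Φ hΦ ε hε Φε hΦε Px hPx ha 𝒱 h𝒱meas h𝒱bdd V hV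
end
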